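/- arXiv:2107.01992 — 5 statements merged into one kernel-verified Lean document; each statement's English description precedes it below -/
import Mathlib

section
/- For every g ∈ SL_N(ℂ), every Hermitian N×N complex matrix h, every column vector v ∈ ℂ^N and all Hermitian N×N matrices H_1, …, H_{N−1}, one has pbar(g·v, (g*)⁻¹·h·g⁻¹)((g*)⁻¹H_1 g⁻¹, …, (g*)⁻¹H_{N−1} g⁻¹) = pbar(v, h)(H_1, …, H_{N−1}); that is, the form p̄ is SL_N(ℂ)-invariant: g* p̄(g v) = p̄(v). -/
open Matrix BigOperators

noncomputable section

/-- The `i`-th entry of the row vector `v* h`, where `v*` is the conjugate transpose of the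
column vector `v`. -/
def vstarM {N : ℕ} (v : Fin N → ℂ) (h : Matrix (Fin N) (Fin N) ℂ) (i : Fin N) : ℂ :=
  ∑ j, (starRingEnd ℂ) (v j) * h j i

/-- `pbar(v,h)(H_1,…,H_{N−1})` : the value of the `(N-1)`-form `p̄(v)` at the point `h` on
the tangent vectors `H_1,…,H_{N-1}`.  Here `N = n+2`; the matrix `M⁽ⁱ⁾` has `(k,l)`-entry
`(v*H_l)_{r_k}` where `r` is the decreasing enumeration of `{0,…,N-1}` omitting `i`
(`r k = Fin.rev ((Fin.rev i).succAbove k)`), and the sign `(−1)^{i−1}` (1-based) is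
`(−1)^{i}` in 0-based indexing. -/
def pbar {n : ℕ} (v : Fin (n + 2) → ℂ) (h : Matrix (Fin (n + 2)) (Fin (n + 2)) ℂ)
    (H : Fin (n + 1) → Matrix (Fin (n + 2)) (Fin (n + 2)) ℂ) : ℂ :=
  2 * (-1 : ℂ) ^ ((n + 2) * (n + 1) / 2) *
    ∑ i : Fin (n + 2), (-1 : ℂ) ^ (i : ℕ) * vstarM v h i *
      Matrix.det (Matrix.of fun k l : Fin (n + 1) =>
        vstarM v (H l) (Fin.rev ((Fin.rev i).succAbove k)))

/-!
Expanding along its first row, the determinant whose rows are `v*h, v*H_1, …, v*H_{N-1}` is,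
up to the sign of the reversal of `Fin (N-1)` coming from the decreasing enumeration `r`, the
alternating sum defining `p̄(v)`. Under `g` each row `v*A` becomes `(v*A) g⁻¹`, so that
determinant, and with it `p̄`, gets multiplied by `det g⁻¹ = 1`.
-/

theorem sum_neg_one_pow_mul_det_minor_eq {R : Type*} [CommRing R] {n : ℕ}
    (u : Fin (n + 2) → R) (x : Fin (n + 1) → Fin (n + 2) → R) :
    ∑ i : Fin (n + 2), (-1 : R) ^ (i : ℕ) * u i *
        det (of fun k l : Fin (n + 1) => x l (Fin.rev ((Fin.rev i).succAbove k)))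
      = (Equiv.Perm.sign (Fin.revPerm : Equiv.Perm (Fin (n + 1))) : R) *
        det (of (Fin.cons u x : Fin (n + 2) → Fin (n + 2) → R)) := by
  rw [det_succ_row_zero, Finset.mul_sum]
  refine Finset.sum_congr rfl fun i _ => ?_
  have minor_eq : (of fun k l : Fin (n + 1) => x l (Fin.rev ((Fin.rev i).succAbove k)))
      = ((of (Fin.cons u x : Fin (n + 2) → Fin (n + 2) → R)).submatrix Fin.succ
          i.succAbove)ᵀ.submatrix Fin.revPerm id := by
    ext k l
    simp [Fin.rev_succAbove]
  rw [minor_eq, det_permute, det_transpose]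
  simp only [of_apply, Fin.cons_zero]
  ring

theorem vstarM_eq_vecMul {N : ℕ} (v : Fin N → ℂ) (A : Matrix (Fin N) (Fin N) ℂ) :
    vstarM v A = star v ᵥ* A := by
  funext i
  simp [vstarM, vecMul, dotProduct]

theorem vstarM_mulVec_conj {N : ℕ} {G : Matrix (Fin N) (Fin N) ℂ} (hG : IsUnit G.det)
    (v : Fin N → ℂ) (A : Matrix (Fin N) (Fin N) ℂ) :
    vstarM (G *ᵥ v) ((Gᴴ)⁻¹ * A * G⁻¹) = vstarM v A ᵥ* G⁻¹ := by
  have hGH : Gᴴ * (Gᴴ)⁻¹ = 1 := mul_nonsing_inv _ (by simpa [det_conjTranspose] using hG)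
  rw [vstarM_eq_vecMul, vstarM_eq_vecMul, star_mulVec, vecMul_vecMul, vecMul_vecMul,
    ← mul_assoc, ← mul_assoc, hGH, one_mul]

theorem of_cons_vecMul {R : Type*} [Semiring R] {m n : ℕ} (u : Fin n → R)
    (x : Fin m → Fin n → R) (A : Matrix (Fin n) (Fin n) R) :
    of (Fin.cons (u ᵥ* A) fun l => x l ᵥ* A : Fin (m + 1) → Fin n → R)
      = of (Fin.cons u x : Fin (m + 1) → Fin n → R) * A := by
  ext i j
  refine Fin.cases ?_ (fun l => ?_) i <;> simp [mul_apply, vecMul, dotProduct]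

theorem pbar_eq_det {n : ℕ} (v : Fin (n + 2) → ℂ) (h : Matrix (Fin (n + 2)) (Fin (n + 2)) ℂ)
    (H : Fin (n + 1) → Matrix (Fin (n + 2)) (Fin (n + 2)) ℂ) :
    pbar v h H = 2 * (-1 : ℂ) ^ ((n + 2) * (n + 1) / 2) *
      (Equiv.Perm.sign (Fin.revPerm : Equiv.Perm (Fin (n + 1))) : ℂ) *
      det (of (Fin.cons (vstarM v h) fun l => vstarM v (H l) :
        Fin (n + 2) → Fin (n + 2) → ℂ)) := by
  rw [pbar, sum_neg_one_pow_mul_det_minor_eq]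
  ring

theorem pbar_mulVec_conj {n : ℕ} {G : Matrix (Fin (n + 2)) (Fin (n + 2)) ℂ}
    (hG : IsUnit G.det) (v : Fin (n + 2) → ℂ) (h : Matrix (Fin (n + 2)) (Fin (n + 2)) ℂ)
    (H : Fin (n + 1) → Matrix (Fin (n + 2)) (Fin (n + 2)) ℂ) :
    pbar (G *ᵥ v) ((Gᴴ)⁻¹ * h * G⁻¹) (fun j => (Gᴴ)⁻¹ * H j * G⁻¹)
      = G.det⁻¹ * pbar v h H := by
  simp only [pbar_eq_det, vstarM_mulVec_conj hG, of_cons_vecMul, det_mul, det_nonsing_inv,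
    Ring.inverse_eq_inv']
  ring

theorem pbar_SL_invariant_general {n : ℕ} (g : Matrix.SpecialLinearGroup (Fin (n + 2)) ℂ)
    (h : Matrix (Fin (n + 2)) (Fin (n + 2)) ℂ)
    (v : Fin (n + 2) → ℂ)
    (H : Fin (n + 1) → Matrix (Fin (n + 2)) (Fin (n + 2)) ℂ) :
    pbar ((g : Matrix (Fin (n + 2)) (Fin (n + 2)) ℂ) *ᵥ v)
      (((g : Matrix (Fin (n + 2)) (Fin (n + 2)) ℂ)ᴴ)⁻¹ * h *
        (g : Matrix (Fin (n + 2)) (Fin (n + 2)) ℂ)⁻¹)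
      (fun j => ((g : Matrix (Fin (n + 2)) (Fin (n + 2)) ℂ)ᴴ)⁻¹ * H j *
        (g : Matrix (Fin (n + 2)) (Fin (n + 2)) ℂ)⁻¹)
      = pbar v h H := by
  rw [pbar_mulVec_conj (by simp [g.prop]), g.prop, inv_one, one_mul]

/-- the form `p̄` is `SL_N(ℂ)`-invariant:
`g* p̄(g v) = p̄(v)`, i.e. for every `g ∈ SL_N(ℂ)`, Hermitian `h`, `v ∈ ℂ^N`, and Hermitian
tangent vectors `H_1,…,H_{N-1}` one has
`pbar(g·v, (g*)⁻¹ h g⁻¹)((g*)⁻¹H_1 g⁻¹, …) = pbar(v,h)(H_1,…)`. -/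
theorem pbar_SL_invariant {n : ℕ} (g : Matrix.SpecialLinearGroup (Fin (n + 2)) ℂ)
    (h : Matrix (Fin (n + 2)) (Fin (n + 2)) ℂ) (hh : h.IsHermitian)
    (v : Fin (n + 2) → ℂ)
    (H : Fin (n + 1) → Matrix (Fin (n + 2)) (Fin (n + 2)) ℂ)
    (hH : ∀ j, (H j).IsHermitian) :
    pbar ((g : Matrix (Fin (n + 2)) (Fin (n + 2)) ℂ) *ᵥ v)
      (((g : Matrix (Fin (n + 2)) (Fin (n + 2)) ℂ)ᴴ)⁻¹ * h *
        (g : Matrix (Fin (n + 2)) (Fin (n + 2)) ℂ)⁻¹)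
      (fun j => ((g : Matrix (Fin (n + 2)) (Fin (n + 2)) ℂ)ᴴ)⁻¹ * H j *
        (g : Matrix (Fin (n + 2)) (Fin (n + 2)) ℂ)⁻¹)
      = pbar v h H :=
  pbar_SL_invariant_general g h v H

end
end

section
/- For every v ∈ ℂ^N, every Hermitian N×N matrix h, and all Hermitian N×N matrices H_0, …, H_{N−1}: Σ_{j=0}^{N−1} (−1)^j · (d/dt at t = 0 of pbar(v, h + tH_j)(H_0, …, H_{j−1}, H_{j+1}, …, H_{N−1})) = dpbar(v)(H_0, …, H_{N−1}). Equivalently (since pbar(v,h) is linear in h), Σ_{j=0}^{N−1} (−1)^j pbar(v, H_j)(H_0, …, H_{j−1}, H_{j+1}, …, H_{N−1}) = dpbar(v)(H_0, …, H_{N−1}). This expresses that the exterior derivative of the (N−1)-form p̄(v) equals 2N(−1)^{(N+2)(N−1)/2} (v*dh)_N ∧ ⋯ ∧ (v*dh)_1. -/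
open Matrix BigOperators

noncomputable section

/-- The scalar `v* h v`. -/
def vhv {N : ℕ} (v : Fin N → ℂ) (h : Matrix (Fin N) (Fin N) ℂ) : ℂ :=
  ∑ i, vstarM v h i * v i

/-- `dpbar(v)(H_1,…,H_N) = 2N(−1)^{(N+2)(N−1)/2} det M` where `M` has `(k,l)`-entry
`(v*H_l)_{N+1−k}` (1-based), i.e. `(v*H_l)_{Fin.rev k}` in 0-based indexing. -/
def dpbar {n : ℕ} (v : Fin (n + 2) → ℂ)
    (H : Fin (n + 2) → Matrix (Fin (n + 2)) (Fin (n + 2)) ℂ) : ℂ :=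
  2 * (n + 2) * (-1 : ℂ) ^ ((n + 4) * (n + 1) / 2) *
    Matrix.det (Matrix.of fun k l : Fin (n + 2) => vstarM v (H l) (Fin.rev k))

/-!
Since `pbar v h` is affine in `h`, the derivative along `H_j` is `pbar v (H_j)`. After reversing
the order of the rows, which costs the sign `(-1)^(N-1)`, the `j`-th term
`(-1)^j pbar v (H_j) (H_0, …, Ĥ_j, …, H_{N-1})` is exactly the Laplace expansion of `det M` along
its `j`-th column, so the alternating sum is `N det M`; the constants then agree because
`(N+2)(N-1)/2 = N(N-1)/2 + (N-1)`.
-/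

lemma vstarM_add_smul {N : ℕ} (v : Fin N → ℂ) (h G : Matrix (Fin N) (Fin N) ℂ) (c : ℂ)
    (i : Fin N) : vstarM v (h + c • G) i = vstarM v h i + c * vstarM v G i := by
  simp only [vstarM, Matrix.add_apply, Matrix.smul_apply, smul_eq_mul, mul_add,
    Finset.sum_add_distrib, Finset.mul_sum, mul_left_comm c]

lemma pbar_add_smul {n : ℕ} (v : Fin (n + 2) → ℂ)
    (h G : Matrix (Fin (n + 2)) (Fin (n + 2)) ℂ) (c : ℂ)
    (Hs : Fin (n + 1) → Matrix (Fin (n + 2)) (Fin (n + 2)) ℂ) :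
    pbar v (h + c • G) Hs = pbar v h Hs + c * pbar v G Hs := by
  simp only [pbar, vstarM_add_smul, mul_add, add_mul, Finset.sum_add_distrib, Finset.mul_sum]
  congr 1
  exact Finset.sum_congr rfl fun i _ => by ring

lemma hasDerivAt_pbar_add_smul {n : ℕ} (v : Fin (n + 2) → ℂ)
    (h G : Matrix (Fin (n + 2)) (Fin (n + 2)) ℂ)
    (Hs : Fin (n + 1) → Matrix (Fin (n + 2)) (Fin (n + 2)) ℂ) (t : ℝ) :
    HasDerivAt (fun s : ℝ => pbar v (h + (s : ℂ) • G) Hs) (pbar v G Hs) t := by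
  simp only [pbar_add_smul]
  simpa using (Complex.ofRealCLM.hasDerivAt (x := t)).mul_const (pbar v G Hs)
    |>.const_add (pbar v h Hs)

lemma neg_one_pow_rev {R : Type*} [Monoid R] [HasDistribNeg R] {m : ℕ} (i : Fin (m + 1)) :
    (-1 : R) ^ (i.rev : ℕ) = (-1) ^ m * (-1) ^ (i : ℕ) := by
  have hrev : m + i = i.rev + 2 * i := by rw [Fin.val_rev]; omega
  rw [← pow_add, hrev, pow_add, pow_mul, neg_one_sq, one_pow, mul_one]

def vstarRevMatrix {N : ℕ} (v : Fin N → ℂ) (H : Fin N → Matrix (Fin N) (Fin N) ℂ) :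
    Matrix (Fin N) (Fin N) ℂ :=
  of fun k l => vstarM v (H l) k.rev

lemma neg_one_pow_mul_pbar_succAbove {n : ℕ} (v : Fin (n + 2) → ℂ)
    (H : Fin (n + 2) → Matrix (Fin (n + 2)) (Fin (n + 2)) ℂ) (j : Fin (n + 2)) :
    (-1 : ℂ) ^ (j : ℕ) * pbar v (H j) (fun k => H (j.succAbove k))
      = 2 * (-1 : ℂ) ^ ((n + 2) * (n + 1) / 2) * (-1) ^ (n + 1) *
        (vstarRevMatrix v H).det := by
  set A := vstarRevMatrix v H
  have hreindex : ∑ i : Fin (n + 2), (-1 : ℂ) ^ (i : ℕ) * vstarM v (H j) i *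
        det (of fun k l : Fin (n + 1) =>
          vstarM v (H (j.succAbove l)) (i.rev.succAbove k).rev)
      = ∑ i : Fin (n + 2), (-1 : ℂ) ^ (i.rev : ℕ) * A i j *
          det (A.submatrix i.succAbove j.succAbove) :=
    Fintype.sum_bijective Fin.rev Fin.rev_bijective _ _ fun i => by
      simp [A, vstarRevMatrix, submatrix]
  rw [pbar, hreindex, det_succ_column A j, Finset.mul_sum, Finset.mul_sum, Finset.mul_sum]
  refine Finset.sum_congr rfl fun i _ => ?_
  rw [neg_one_pow_rev, pow_add]
  ring

lemma sum_neg_one_pow_mul_pbar_succAbove {n : ℕ} (v : Fin (n + 2) → ℂ)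
    (H : Fin (n + 2) → Matrix (Fin (n + 2)) (Fin (n + 2)) ℂ) :
    ∑ j : Fin (n + 2), (-1 : ℂ) ^ (j : ℕ) * pbar v (H j) (fun k => H (j.succAbove k))
      = dpbar v H := by
  have hexp : (n + 4) * (n + 1) / 2 = (n + 2) * (n + 1) / 2 + (n + 1) := by
    rw [show (n + 4) * (n + 1) = (n + 2) * (n + 1) + (n + 1) * 2 by ring,
      Nat.add_mul_div_right _ _ two_pos]
  simp only [neg_one_pow_mul_pbar_succAbove, Finset.sum_const, Finset.card_univ,
    Fintype.card_fin, nsmul_eq_mul]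
  rw [dpbar, vstarRevMatrix, hexp, pow_add]
  push_cast
  ring

theorem d_pbar_eq_general {n : ℕ} (v : Fin (n + 2) → ℂ)
    (h : Matrix (Fin (n + 2)) (Fin (n + 2)) ℂ)
    (H : Fin (n + 2) → Matrix (Fin (n + 2)) (Fin (n + 2)) ℂ) :
    (∑ j : Fin (n + 2), (-1 : ℂ) ^ (j : ℕ) *
        deriv (fun t : ℝ =>
          pbar v (h + (t : ℂ) • H j) (fun k => H (j.succAbove k))) 0
      = dpbar v H) ∧
    (∑ j : Fin (n + 2), (-1 : ℂ) ^ (j : ℕ) *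
        pbar v (H j) (fun k => H (j.succAbove k))
      = dpbar v H) := by
  refine ⟨?_, sum_neg_one_pow_mul_pbar_succAbove v H⟩
  simp only [fun j => (hasDerivAt_pbar_add_smul v h (H j) (fun k => H (j.succAbove k)) 0).deriv]
  exact sum_neg_one_pow_mul_pbar_succAbove v H

/-- the exterior derivative of the `(N−1)`-form `p̄(v)` equals
`2N(−1)^{(N+2)(N−1)/2} (v*dh)_N ∧ ⋯ ∧ (v*dh)_1`; concretely, for Hermitian `h` and
Hermitian tangent vectors `H_0,…,H_{N-1}`,
`Σ_j (−1)^j ∂_t|_{t=0} pbar(v, h + tH_j)(H_0,…,Ĥ_j,…,H_{N−1}) = dpbar(v)(H_0,…,H_{N−1})`,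
and equivalently (by linearity of `pbar(v,·)`)
`Σ_j (−1)^j pbar(v, H_j)(H_0,…,Ĥ_j,…,H_{N−1}) = dpbar(v)(H_0,…,H_{N−1})`. -/
theorem d_pbar_eq {n : ℕ} (v : Fin (n + 2) → ℂ)
    (h : Matrix (Fin (n + 2)) (Fin (n + 2)) ℂ) (hh : h.IsHermitian)
    (H : Fin (n + 2) → Matrix (Fin (n + 2)) (Fin (n + 2)) ℂ)
    (hH : ∀ j, (H j).IsHermitian) :
    (∑ j : Fin (n + 2), (-1 : ℂ) ^ (j : ℕ) *
        deriv (fun t : ℝ =>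
          pbar v (h + (t : ℂ) • H j) (fun k => H (j.succAbove k))) 0
      = dpbar v H) ∧
    (∑ j : Fin (n + 2), (-1 : ℂ) ^ (j : ℕ) *
        pbar v (H j) (fun k => H (j.succAbove k))
      = dpbar v H) :=
  d_pbar_eq_general v h H

end
end

section
/- For every v ∈ ℂ^N, every Hermitian N×N matrix h, and all Hermitian N×N matrices H_0, …, H_{N−1}: N · Σ_{j=0}^{N−1} (−1)^j (v*H_j v) · pbar(v,h)(H_0, …, H_{j−1}, H_{j+1}, …, H_{N−1}) = (v*hv) · dpbar(v)(H_0, …, H_{N−1}). (This is the identity N d(v*hv) ∧ p̄(v) = (v*hv) dp̄(v); note that the directional derivative of h ↦ v*hv in the direction H is v*Hv.) -/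
open Matrix BigOperators

noncomputable section

theorem Fin.neg_one_pow_val_eq {R : Type*} [Ring R] {n : ℕ} (i : Fin (n + 1)) :
    (-1 : R) ^ (i : ℕ) = (-1) ^ n * (-1) ^ (i.rev : ℕ) := by
  have hn : (-1 : R) ^ n = (-1) ^ (i : ℕ) * (-1) ^ (i.rev : ℕ) := by
    rw [← pow_add, Fin.val_rev]
    congr 1
    omega
  rw [hn, mul_assoc, ← pow_add, ← two_mul, pow_mul]
  simp

/-- Laplace expansion along row `i` of the matrix whose `i`-th row is replaced by the
combination `c ᵥ* W` of all rows of `W`. -/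
theorem Matrix.sum_cofactor_vecMul {R : Type*} [CommRing R] {n : ℕ}
    (W : Matrix (Fin (n + 1)) (Fin (n + 1)) R) (i : Fin (n + 1)) (c : Fin (n + 1) → R) :
    ∑ j : Fin (n + 1),
        (-1) ^ ((i : ℕ) + j) * (c ᵥ* W) j * (W.submatrix i.succAbove j.succAbove).det
      = c i * W.det := by
  have hexpand := det_succ_row (W.updateRow i (c ᵥ* W)) i
  simp only [updateRow_self, submatrix_updateRow_succAbove] at hexpand
  rw [← hexpand, vecMul_eq_sum, det_updateRow_sum, smul_eq_mul]

def dpbarMatrix {n : ℕ} (v : Fin (n + 2) → ℂ)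
    (H : Fin (n + 2) → Matrix (Fin (n + 2)) (Fin (n + 2)) ℂ) :
    Matrix (Fin (n + 2)) (Fin (n + 2)) ℂ :=
  Matrix.of fun k l => vstarM v (H l) (Fin.rev k)

theorem vecMul_dpbarMatrix {n : ℕ} (v : Fin (n + 2) → ℂ)
    (H : Fin (n + 2) → Matrix (Fin (n + 2)) (Fin (n + 2)) ℂ) :
    (v ∘ Fin.rev) ᵥ* dpbarMatrix v H = fun l => vhv v (H l) := by
  ext l
  rw [vhv, ← Equiv.sum_comp Fin.revPerm]
  simp [vecMul, dotProduct, dpbarMatrix, mul_comm]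

/-- The row vector `(v* H_l v)_l` is a combination of the rows of `dpbarMatrix v H`, so expanding
along the row `rev i` that `pbar` deletes gives `v i` times the full determinant. -/
theorem sum_vhv_mul_det_pbar_minor {n : ℕ} (v : Fin (n + 2) → ℂ)
    (H : Fin (n + 2) → Matrix (Fin (n + 2)) (Fin (n + 2)) ℂ) (i : Fin (n + 2)) :
    ∑ j : Fin (n + 2), (-1 : ℂ) ^ ((i.rev : ℕ) + j) * vhv v (H j) *
        (Matrix.of fun k l : Fin (n + 1) =>
          vstarM v (H (j.succAbove l)) (Fin.rev ((Fin.rev i).succAbove k))).det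
      = v i * (dpbarMatrix v H).det := by
  have := Matrix.sum_cofactor_vecMul (dpbarMatrix v H) i.rev (v ∘ Fin.rev)
  rwa [vecMul_dpbarMatrix, Function.comp_apply, Fin.rev_rev] at this

theorem d_vhv_wedge_pbar_general {n : ℕ} (v : Fin (n + 2) → ℂ)
    (h : Matrix (Fin (n + 2)) (Fin (n + 2)) ℂ)
    (H : Fin (n + 2) → Matrix (Fin (n + 2)) (Fin (n + 2)) ℂ) :
    (n + 2 : ℂ) * ∑ j : Fin (n + 2), (-1 : ℂ) ^ (j : ℕ) * vhv v (H j) *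
        pbar v h (fun k => H (j.succAbove k))
      = vhv v h * dpbar v H := by
  set s : ℂ := 2 * (-1) ^ ((n + 2) * (n + 1) / 2) * (-1) ^ (n + 1) * (n + 2)
  have hsign : (n + 4) * (n + 1) / 2 = (n + 2) * (n + 1) / 2 + (n + 1) := by
    rw [show (n + 4) * (n + 1) = (n + 2) * (n + 1) + 2 * (n + 1) by ring,
      Nat.add_mul_div_left _ _ two_pos]
  calc _ = s * ∑ i, vstarM v h i * ∑ j : Fin (n + 2), (-1 : ℂ) ^ ((i.rev : ℕ) + j) *
          vhv v (H j) * (Matrix.of fun k l : Fin (n + 1) =>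
            vstarM v (H (j.succAbove l)) (Fin.rev ((Fin.rev i).succAbove k))).det := by
        simp only [pbar, Finset.mul_sum]
        rw [Finset.sum_comm]
        refine Finset.sum_congr rfl fun i _ => Finset.sum_congr rfl fun j _ => ?_
        rw [i.neg_one_pow_val_eq]
        ring
    _ = s * ∑ i, vstarM v h i * (v i * (dpbarMatrix v H).det) := by
        simp only [sum_vhv_mul_det_pbar_minor]
    _ = vhv v h * dpbar v H := by
        rw [dpbar, hsign, vhv, ← dpbarMatrix, Finset.sum_mul, Finset.mul_sum]
        refine Finset.sum_congr rfl fun i _ => ?_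
        ring

/-- `N d(v*hv) ∧ p̄(v) = (v*hv) dp̄(v)` : for every `v`, Hermitian `h`, and
Hermitian `H_0,…,H_{N−1}`,
`N · Σ_j (−1)^j (v*H_j v) · pbar(v,h)(H_0,…,Ĥ_j,…,H_{N−1}) = (v*hv) · dpbar(v)(H_0,…,H_{N−1})`
(the directional derivative of `h ↦ v*hv` in the direction `H` is `v*Hv`). -/
theorem d_vhv_wedge_pbar {n : ℕ} (v : Fin (n + 2) → ℂ)
    (h : Matrix (Fin (n + 2)) (Fin (n + 2)) ℂ) (hh : h.IsHermitian)
    (H : Fin (n + 2) → Matrix (Fin (n + 2)) (Fin (n + 2)) ℂ)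
    (hH : ∀ j, (H j).IsHermitian) :
    (n + 2 : ℂ) * ∑ j : Fin (n + 2), (-1 : ℂ) ^ (j : ℕ) * vhv v (H j) *
        pbar v h (fun k => H (j.succAbove k))
      = vhv v h * dpbar v H :=
  d_vhv_wedge_pbar_general v h H

end
end

section
/- Let k be an imaginary quadratic field with a fixed complex embedding σ: k → ℂ, let 𝔞 be a nonzero fractional ideal of k, let p, q be non-negative integers, let z ∈ ℂ with z ∉ σ(𝔞), and let s ∈ ℂ with Re(s) > 1 + q − p. Then the family (a ∈ 𝔞) ↦ conj(z + σ(a))^q / ( (z + σ(a))^{p+1} · |z + σ(a)|^{s} ) is summable; i.e. the Kronecker–Eisenstein series K^{p,q}(z, 𝔞, s) = (p!/2) Σ'_{a ∈ σ(𝔞)} conj(z+a)^q / ((z+a)^{p+1} |z+a|^{s}) converges absolutely for Re(s) > 1 + q − p. -/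
/-!
Each summand has absolute value `|z + σ a| ^ (-t)` with `t = p + 1 - q + Re s > 2`. Since `k` has
degree `2` and `σ k ⊄ ℝ`, the `σ`-image of a `ℚ`-basis of `k` spans `ℂ` over `ℝ`, so `σ` maps a
`ℤ`-basis of `𝔞` to an `ℝ`-basis of `ℂ`. Hence `σ 𝔞` is a lattice of rank `2` in `ℂ`, and
`∑_{λ ∈ Λ} |z + λ| ^ (-t)` converges over any such lattice `Λ` once `t > 2`.
-/

open NumberField Module Submodule Set

theorem norm_conj_pow_div_pow_mul_cpow (w : ℂ) (p q : ℕ) (s : ℂ)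
    (h : (p : ℝ) + 1 - q + s.re ≠ 0) :
    ‖(starRingEnd ℂ) w ^ q / (w ^ (p + 1) * ((‖w‖ : ℂ)) ^ s)‖
      = ‖w‖ ^ (-((p : ℝ) + 1 - q + s.re)) := by
  -- at `w = 0` both sides vanish: `x / 0 = 0` and `0 ^ r = 0` for `r ≠ 0`
  rcases eq_or_ne w 0 with rfl | hw
  · rw [norm_zero, Real.zero_rpow (neg_ne_zero.mpr h)]
    simp
  have hpos : 0 < ‖w‖ := norm_pos_iff.mpr hw
  rw [norm_div, norm_pow, norm_mul, norm_pow, Complex.norm_conj,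
    Complex.norm_cpow_eq_rpow_re_of_pos hpos, ← Real.rpow_natCast, ← Real.rpow_natCast,
    ← Real.rpow_add hpos, ← Real.rpow_sub hpos]
  congr 1
  push_cast
  ring

theorem summable_norm_add_rpow_of_forall_mem_zspan {E ι S : Type*} [NormedAddCommGroup E]
    [NormedSpace ℝ E] [Finite ι] (B : Basis ι ℝ E) {f : S → E} (hf : Function.Injective f)
    (hB : ∀ x, f x ∈ span ℤ (range B)) (z : E) {t : ℝ} (ht : finrank ℝ E < t) :
    Summable fun x => ‖z + f x‖ ^ (-t) := by
  have := B.finiteDimensional_of_finite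
  have hL := ZLattice.summable_norm_sub_rpow (span ℤ (range B)) (-t)
    (by rw [ZLattice.rank ℝ]; linarith) (-z)
  refine (hL.comp_injective (i := fun x => ⟨f x, hB x⟩) fun x y h => hf ?_).congr fun x => ?_
  · simpa using h
  · simp [sub_neg_eq_add, add_comm]

theorem RingHom.span_real_range_eq_top {R : Type*} [Ring R] (σ : R →+* ℂ)
    (him : ∃ x, (σ x).im ≠ 0) : span ℝ (Set.range σ) = ⊤ := by
  obtain ⟨x, hx⟩ := him
  refine eq_top_iff.mpr fun w _ => ?_
  set b := w.im / (σ x).im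
  have hw : w = (w.re - b * (σ x).re) • σ 1 + b • σ x := by
    apply Complex.ext <;> simp [b]
    field_simp
  rw [hw]
  exact add_mem (smul_mem _ _ (subset_span ⟨1, rfl⟩)) (smul_mem _ _ (subset_span ⟨x, rfl⟩))

theorem span_real_range_comp_basis_eq_top {k ι : Type*} [Field k] [CharZero k] (σ : k →+* ℂ)
    (him : ∃ x, (σ x).im ≠ 0) (v : Basis ι ℚ k) : span ℝ (range (σ ∘ v)) = ⊤ := by
  rw [eq_top_iff, ← σ.span_real_range_eq_top him, span_le]
  rintro _ ⟨x, rfl⟩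
  have hx : σ x ∈ span ℚ (range (σ ∘ v)) := by
    rw [range_comp]
    exact apply_mem_span_image_of_mem_span σ.toRatAlgHom.toLinearMap (v.mem_span x)
  exact span_le_restrictScalars ℚ ℝ _ hx

theorem exists_basis_real_forall_mem_zspan {k : Type*} [Field k] [NumberField k]
    (hdeg : finrank ℚ k = 2) (σ : k →+* ℂ) (him : ∃ x, (σ x).im ≠ 0)
    (𝔞 : FractionalIdeal (nonZeroDivisors (𝓞 k)) k) (h𝔞 : 𝔞 ≠ 0) :
    ∃ B : Basis (Fin 2) ℝ ℂ, ∀ x ∈ 𝔞, σ x ∈ span ℤ (range B) := by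
  set I := Units.mk0 𝔞 h𝔞
  set v := basisOfFractionalIdeal k I
  have hcard : Fintype.card (Free.ChooseBasisIndex ℤ I) = finrank ℝ ℂ := by
    rw [← finrank_eq_card_basis v, hdeg, Complex.finrank_real_complex]
  let B := basisOfTopLeSpanOfCardEqFinrank (σ ∘ v)
    (span_real_range_comp_basis_eq_top σ him v).ge hcard
  refine ⟨B.reindex (Fintype.equivFinOfCardEq (hcard.trans Complex.finrank_real_complex)),
    fun x hx => ?_⟩
  have hxv : x ∈ span ℤ (range v) := (mem_span_basisOfFractionalIdeal k).mpr hx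
  rw [B.range_reindex, coe_basisOfTopLeSpanOfCardEqFinrank, range_comp]
  exact apply_mem_span_image_of_mem_span σ.toIntAlgHom.toLinearMap hxv

theorem kroneckerEisenstein_summable_general
    (k : Type*) [Field k] [NumberField k]
    (hdeg : Module.finrank ℚ k = 2)
    (σ : k →+* ℂ) (him : ∃ x : k, (σ x).im ≠ 0)
    (𝔞 : FractionalIdeal (nonZeroDivisors (𝓞 k)) k) (h𝔞 : 𝔞 ≠ 0)
    (p q : ℕ) (z : ℂ)
    (s : ℂ) (hs : 1 + (q : ℝ) - (p : ℝ) < s.re) :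
    Summable (fun a : {x : k // x ∈ 𝔞} =>
      (starRingEnd ℂ) (z + σ a.1) ^ q /
        ((z + σ a.1) ^ (p + 1) * ((‖z + σ a.1‖ : ℂ)) ^ s)) := by
  obtain ⟨B, hB⟩ := exists_basis_real_forall_mem_zspan hdeg σ him 𝔞 h𝔞
  have ht : (finrank ℝ ℂ : ℝ) < p + 1 - q + s.re := by
    rw [Complex.finrank_real_complex]
    push_cast
    linarith
  refine Summable.of_norm ?_
  simp_rw [norm_conj_pow_div_pow_mul_cpow _ p q s (by linarith)]
  exact summable_norm_add_rpow_of_forall_mem_zspan B (σ.injective.comp Subtype.val_injective)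
    (fun a => hB a.1 a.2) z ht

/-- let `k` be an imaginary quadratic field with a fixed complex embedding
`σ : k → ℂ`, let `𝔞` be a nonzero fractional ideal of `k`, let `p, q ≥ 0`, let `z ∈ ℂ`
with `z ∉ σ(𝔞)`, and let `s ∈ ℂ` with `Re(s) > 1 + q − p`.  Then the family
`(a ∈ 𝔞) ↦ conj(z+σ(a))^q / ((z+σ(a))^{p+1} |z+σ(a)|^{s})` is summable, i.e. the
Kronecker–Eisenstein series `K^{p,q}(z,𝔞,s)` converges absolutely in that range.
(Here `|w|^s = exp(s log |w|)`.) -/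
theorem kroneckerEisenstein_summable
    (k : Type*) [Field k] [NumberField k]
    (hdeg : Module.finrank ℚ k = 2)
    (σ : k →+* ℂ) (him : ∃ x : k, (σ x).im ≠ 0)
    (𝔞 : FractionalIdeal (nonZeroDivisors (𝓞 k)) k) (h𝔞 : 𝔞 ≠ 0)
    (p q : ℕ) (z : ℂ) (hz : ∀ x ∈ 𝔞, z ≠ σ x)
    (s : ℂ) (hs : 1 + (q : ℝ) - (p : ℝ) < s.re) :
    Summable (fun a : {x : k // x ∈ 𝔞} =>
      (starRingEnd ℂ) (z + σ a.1) ^ q /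
        ((z + σ a.1) ^ (p + 1) * ((‖z + σ a.1‖ : ℂ)) ^ s)) :=
  kroneckerEisenstein_summable_general k hdeg σ him 𝔞 h𝔞 p q z s hs
end

section
/- Let k be an imaginary quadratic field with ring of integers O and a fixed complex embedding σ: k → ℂ, let N ≥ 1, and let Λ ⊆ k^N be an O-lattice (a finitely generated O-submodule of k^N that spans k^N over k). Let I = (i_1,…,i_N) and J = (j_1,…,j_N) be tuples of non-negative integers, let z = (z_1,…,z_N) ∈ ℂ^N satisfy z_k + σ(λ_k) ≠ 0 for every λ = (λ_1,…,λ_N) ∈ Λ and every 1 ≤ k ≤ N, and let s ∈ ℂ with Re(s) > 1 + max_k (j_k − i_k). Then the family (λ ∈ Λ) ↦ Π_{k=1}^N ( i_k! · conj(z_k + σ(λ_k))^{j_k} / ( (z_k + σ(λ_k))^{i_k+1} · |z_k + σ(λ_k)|^{s} ) ) is summable; i.e. the series K^{I,J}(z, Λ, s) converges absolutely in that range. -/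
/-!
Writing `w_m = z_m + σ(λ_m)`, the `m`-th factor has absolute value `I_m! |w_m|^{-t_m}` with
`t_m = Re s + I_m + 1 - J_m > 2`. Since `k` is imaginary quadratic, `σ(𝓞 k)` is a lattice of rank
two in `ℂ`, and so is `σ(a⁻¹ 𝓞 k)` for a common denominator `a` of the `m`-th coordinates of `Λ`.
Hence `λ ↦ (σ(λ_m))_m` embeds `Λ` into a product of rank-two lattices, on which
`∏_m |w_m|^{-t_m}` is summable, being a product of Eisenstein-type series in the exponent range
`t_m > 2`.
-/

open NumberField BigOperators

noncomputable section

open Module Submodule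

theorem summable_pi_prod_of_nonneg : ∀ {n : ℕ} {α : Fin n → Type*} (g : ∀ i, α i → ℝ),
    (∀ i a, 0 ≤ g i a) → (∀ i, Summable (g i)) →
    Summable fun a : (∀ i, α i) => ∏ i, g i (a i)
  | 0, _, _, _, _ => .of_finite
  | n + 1, α, g, hg, hgs => by
    have htail := summable_pi_prod_of_nonneg (fun i : Fin n => g i.succ) (fun _ _ => hg _ _)
      fun _ => hgs _
    rw [← (Fin.consEquiv α).summable_iff]
    refine ((hgs 0).mul_of_nonneg htail (hg 0) fun _ => Finset.prod_nonneg fun _ _ => hg _ _).congr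
      fun p => ?_
    simp [Fin.prod_univ_succ]

theorem ZLattice.finrank_int_le {E : Type*} [NormedAddCommGroup E] [NormedSpace ℝ E]
    [FiniteDimensional ℝ E] (L : Submodule ℤ E) [DiscreteTopology L] :
    finrank ℤ L ≤ finrank ℝ E := by
  have h := Real.finrank_eq_int_finrank_of_discrete (s := (L : Set E)) (by rwa [span_eq])
  rw [Set.finrank, Set.finrank, span_eq] at h
  rw [← h]
  exact Submodule.finrank_le _

theorem summable_prod_norm_sub_rpow_of_injective {E : Type*} [NormedAddCommGroup E]
    [NormedSpace ℝ E] [FiniteDimensional ℝ E] {n : ℕ} (L : Fin n → Submodule ℤ E)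
    [∀ i, DiscreteTopology (L i)] {α : Type*} (f : α → Fin n → E) (hf : Function.Injective f)
    (hfL : ∀ a i, f a i ∈ L i) (x : Fin n → E) {t : Fin n → ℝ} (ht : ∀ i, finrank ℝ E < t i) :
    Summable fun a => ∏ i, ‖f a i - x i‖ ^ (-t i) := by
  have hL (i : Fin n) : Summable fun v : L i => ‖(v : E) - x i‖ ^ (-t i) := by
    have : (finrank ℤ (L i) : ℝ) ≤ finrank ℝ E := mod_cast ZLattice.finrank_int_le (L i)
    exact ZLattice.summable_norm_sub_rpow (L i) _ (by linarith [ht i]) _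
  have hpi : Summable fun v : ∀ i, L i => ∏ i, ‖(v i : E) - x i‖ ^ (-t i) :=
    summable_pi_prod_of_nonneg (fun i (v : L i) => ‖(v : E) - x i‖ ^ (-t i))
      (fun _ _ => by positivity) hL
  let g : α → ∀ i, L i := fun a i => ⟨f a i, hfL a i⟩
  have hg : Function.Injective g := fun a b h =>
    hf (funext fun i => congrArg Subtype.val (congrFun h i))
  exact (hpi.comp_injective hg).congr fun _ => rfl

theorem Complex.eq_top_of_one_mem_of_im_ne_zero {S : Submodule ℝ ℂ} (h1 : 1 ∈ S) {w : ℂ}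
    (hw : w ∈ S) (hw' : w.im ≠ 0) : S = ⊤ := by
  have hI : Complex.I ∈ S := by
    have : Complex.I = w.im⁻¹ • (w - w.re • 1) := by
      apply Complex.ext <;> simp [hw']
    exact this ▸ S.smul_mem _ (S.sub_mem hw (S.smul_mem _ h1))
  refine eq_top_iff.2 fun z _ => ?_
  rw [← Complex.re_add_im z, ← mul_one (z.re : ℂ), ← Complex.real_smul, ← Complex.real_smul]
  exact S.add_mem (S.smul_mem _ h1) (S.smul_mem _ hI)

section ImaginaryQuadratic

variable {k : Type*} [Field k] (σ : k →+* ℂ)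

def ringOfIntegersLattice : Submodule ℤ ℂ :=
  LinearMap.range (σ.comp (algebraMap (𝓞 k) k)).toIntAlgHom.toLinearMap

theorem mem_ringOfIntegersLattice (a : 𝓞 k) : σ a ∈ ringOfIntegersLattice σ := ⟨a, rfl⟩

theorem ringOfIntegersLattice_eq_span {ι : Type*} (B : Basis ι ℤ (𝓞 k)) :
    ringOfIntegersLattice σ = span ℤ (Set.range fun i => σ (B i)) := by
  rw [ringOfIntegersLattice, LinearMap.range_eq_map, ← B.span_eq, map_span, ← Set.range_comp]
  rfl

theorem exists_ringOfIntegers_im_ne_zero [NumberField k] (him : ∃ x : k, (σ x).im ≠ 0) :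
    ∃ a : 𝓞 k, (σ a).im ≠ 0 := by
  obtain ⟨x, hx⟩ := him
  obtain ⟨y, hy, hint⟩ := ((IsFractionRing.isAlgebraic_iff ℤ ℚ k).2
    (Algebra.IsAlgebraic.isAlgebraic x)).exists_integral_multiple
  exact ⟨⟨y • x, hint⟩, by simp [hy, hx]⟩

theorem span_real_ringOfIntegersLattice [NumberField k] (him : ∃ x : k, (σ x).im ≠ 0) :
    span ℝ (ringOfIntegersLattice σ : Set ℂ) = ⊤ := by
  obtain ⟨a, ha⟩ := exists_ringOfIntegers_im_ne_zero σ him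
  refine Complex.eq_top_of_one_mem_of_im_ne_zero (subset_span ?_)
    (subset_span (mem_ringOfIntegersLattice σ a)) ha
  simpa using mem_ringOfIntegersLattice σ 1

theorem discreteTopology_ringOfIntegersLattice [NumberField k] (hdeg : finrank ℚ k = 2)
    (him : ∃ x : k, (σ x).im ≠ 0) : DiscreteTopology (ringOfIntegersLattice σ) := by
  let B := Free.chooseBasis ℤ (𝓞 k)
  have hcard : Fintype.card (Free.ChooseBasisIndex ℤ (𝓞 k)) = finrank ℝ ℂ := by
    rw [← finrank_eq_card_chooseBasisIndex, RingOfIntegers.rank, hdeg,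
      Complex.finrank_real_complex]
  have hspan : ⊤ ≤ span ℝ (Set.range fun i => σ (B i)) := by
    rw [← span_real_ringOfIntegersLattice σ him, ringOfIntegersLattice_eq_span σ B,
      span_span_of_tower]
  rw [ringOfIntegersLattice_eq_span σ B, ← coe_basisOfTopLeSpanOfCardEqFinrank _ hspan hcard]
  infer_instance

theorem exists_discreteTopology_forall_mem_of_fg [NumberField k] (hdeg : finrank ℚ k = 2)
    (him : ∃ x : k, (σ x).im ≠ 0) {M : Submodule (𝓞 k) k} (hM : M.FG) :
    ∃ L : Submodule ℤ ℂ, DiscreteTopology L ∧ ∀ x ∈ M, σ x ∈ L := by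
  obtain ⟨a, ha, hint⟩ := FractionalIdeal.isFractional_of_fg (S := nonZeroDivisors (𝓞 k)) hM
  have := discreteTopology_ringOfIntegersLattice σ hdeg him
  have hσa : σ a ≠ 0 := by simpa using nonZeroDivisors.coe_ne_zero ⟨a, ha⟩
  refine ⟨ZLattice.comap ℝ (ringOfIntegersLattice σ) (LinearMap.mulLeft ℝ (σ a)),
    ZLattice.comap_discreteTopology _ _ (continuous_const.mul continuous_id)
      (mul_right_injective₀ hσa), fun x hx => ?_⟩
  obtain ⟨c, hc⟩ := hint x hx
  change σ a * σ x ∈ ringOfIntegersLattice σ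
  rw [← map_mul, ← Algebra.smul_def, ← hc]
  exact mem_ringOfIntegersLattice σ c

end ImaginaryQuadratic

def kroneckerEisensteinTerm (i j : ℕ) (s w : ℂ) : ℂ :=
  (i.factorial : ℂ) * (starRingEnd ℂ) w ^ j / (w ^ (i + 1) * ((‖w‖ : ℝ) : ℂ) ^ s)

theorem norm_kroneckerEisensteinTerm (i j : ℕ) (s : ℂ) {w : ℂ} (hw : w ≠ 0) :
    ‖kroneckerEisensteinTerm i j s w‖ = i.factorial * ‖w‖ ^ (-(s.re + i + 1 - j)) := by
  have hw' : 0 < ‖w‖ := norm_pos_iff.mpr hw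
  rw [kroneckerEisensteinTerm, norm_div, norm_mul, norm_mul, norm_pow, norm_pow, Complex.norm_conj,
    Complex.norm_natCast, Complex.norm_cpow_eq_rpow_re_of_pos hw', mul_div_assoc,
    ← Real.rpow_natCast, ← Real.rpow_natCast, ← Real.rpow_add hw', ← Real.rpow_sub hw']
  congr 2
  push_cast
  ring

theorem kroneckerEisenstein_lattice_summable_general
    (k : Type*) [Field k] [NumberField k]
    (hdeg : Module.finrank ℚ k = 2)
    (σ : k →+* ℂ) (him : ∃ x : k, (σ x).im ≠ 0)
    (n : ℕ)
    (Λ : Submodule (𝓞 k) (Fin (n + 1) → k)) (hfg : Λ.FG)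
    (I J : Fin (n + 1) → ℕ)
    (z : Fin (n + 1) → ℂ)
    (hz : ∀ lam ∈ Λ, ∀ m : Fin (n + 1), z m + σ (lam m) ≠ 0)
    (s : ℂ) (hs : ∀ m : Fin (n + 1), 1 + (J m : ℝ) - (I m : ℝ) < s.re) :
    Summable (fun lam : Λ =>
      ∏ m : Fin (n + 1), (Nat.factorial (I m) : ℂ) *
        (starRingEnd ℂ) (z m + σ (lam.1 m)) ^ (J m) /
          ((z m + σ (lam.1 m)) ^ (I m + 1) *
            (((‖z m + σ (lam.1 m)‖ : ℝ) : ℂ)) ^ s)) := by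
  choose L hL hσL using fun m =>
    exists_discreteTopology_forall_mem_of_fg σ hdeg him (hfg.map (LinearMap.proj m))
  have hinj : Function.Injective fun (lam : Λ) m => σ (lam.1 m) := fun a b h =>
    Subtype.val_injective (funext fun m => σ.injective (congrFun h m))
  have hdom := summable_prod_norm_sub_rpow_of_injective L _ hinj
    (fun lam m => hσL m _ (mem_map_of_mem lam.2)) (-z)
    (t := fun m => s.re + I m + 1 - J m) fun m => by
      rw [Complex.finrank_real_complex]; push_cast; linarith [hs m]
  refine Summable.of_norm ((hdom.mul_left (∏ m, ((I m).factorial : ℝ))).congr fun lam => ?_)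
  change _ = ‖∏ m, kroneckerEisensteinTerm (I m) (J m) s (z m + σ (lam.1 m))‖
  simp only [norm_prod, norm_kroneckerEisensteinTerm _ _ _ (hz _ lam.2 _), Finset.prod_mul_distrib,
    Pi.neg_apply, sub_neg_eq_add, add_comm]

/-- let `k` be an imaginary quadratic field with a fixed complex embedding
`σ : k → ℂ`, let `N = n+1 ≥ 1`, and let `Λ ⊆ k^N` be an `O`-lattice (a finitely generated
`O`-submodule spanning `k^N` over `k`).  Let `I, J` be tuples of non-negative integers,
let `z ∈ ℂ^N` with `z_m + σ(λ_m) ≠ 0` for every `λ ∈ Λ` and every `m`, and let `s ∈ ℂ`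
with `Re(s) > 1 + max_m (J_m − I_m)`.  Then the family
`(λ ∈ Λ) ↦ Π_m I_m! · conj(z_m+σ(λ_m))^{J_m} / ((z_m+σ(λ_m))^{I_m+1} |z_m+σ(λ_m)|^{s})`
is summable, i.e. the series `K^{I,J}(z,Λ,s)` converges absolutely in that range. -/
theorem kroneckerEisenstein_lattice_summable
    (k : Type*) [Field k] [NumberField k]
    (hdeg : Module.finrank ℚ k = 2)
    (σ : k →+* ℂ) (him : ∃ x : k, (σ x).im ≠ 0)
    (n : ℕ)
    (Λ : Submodule (𝓞 k) (Fin (n + 1) → k)) (hfg : Λ.FG)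
    (hspan : Submodule.span k (Λ : Set (Fin (n + 1) → k)) = ⊤)
    (I J : Fin (n + 1) → ℕ)
    (z : Fin (n + 1) → ℂ)
    (hz : ∀ lam ∈ Λ, ∀ m : Fin (n + 1), z m + σ (lam m) ≠ 0)
    (s : ℂ) (hs : ∀ m : Fin (n + 1), 1 + (J m : ℝ) - (I m : ℝ) < s.re) :
    Summable (fun lam : Λ =>
      ∏ m : Fin (n + 1), (Nat.factorial (I m) : ℂ) *
        (starRingEnd ℂ) (z m + σ (lam.1 m)) ^ (J m) /
          ((z m + σ (lam.1 m)) ^ (I m + 1) *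
            (((‖z m + σ (lam.1 m)‖ : ℝ) : ℂ)) ^ s)) :=
  kroneckerEisenstein_lattice_summable_general k hdeg σ him n Λ hfg I J z hz s hs
end
end
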